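/- Let T' be a lattice triangle in ℝ² with vertices a, b, c whose only lattice points are its vertices, and let h be a positive integer. If w ∈ ℤ² satisfies w/h ∈ T' (i.e., w ∈ h ∗ T'), then there exist nonnegative integers i, j, k with i + j + k = h and w = i·a + j·b + k·c. -/

import Mathlib

open MeasureTheory Pointwise

/-- The lattice points of `ℝ^n`: points with all coordinates integers. -/
def latticePts (n : ℕ) : Set (Fin n → ℝ) :=
  {x | ∀ i, ∃ z : ℤ, x i = (z : ℝ)}

/-- The `h`-fold sumset of `X ⊆ ℝ^n`. -/
def sumset (n h : ℕ) (X : Set (Fin n → ℝ)) : Set (Fin n → ℝ) :=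
  {y | ∃ f : Fin h → (Fin n → ℝ), (∀ i, f i ∈ X) ∧ y = ∑ i, f i}

/-- The dilation `h ∗ X = {h • x : x ∈ X}`. -/
def dilate (n h : ℕ) (X : Set (Fin n → ℝ)) : Set (Fin n → ℝ) :=
  {y | ∃ x ∈ X, y = (h : ℝ) • x}

/-- `P` is a lattice polytope in `ℝ^n`: the convex hull of a nonempty finite set of
lattice points. -/
def IsLatticePolytope (n : ℕ) (P : Set (Fin n → ℝ)) : Prop :=
  ∃ S : Finset (Fin n → ℝ), S.Nonempty ∧ ↑S ⊆ latticePts n ∧ P = convexHull ℝ (S : Set (Fin n → ℝ))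

/-!
Write `w = h • x` with barycentric coordinates of `x`, so that `w = α • a + β • b + γ • c` with
`α + β + γ = h`. Subtracting integer multiples of the vertices leaves the lattice point
`p = (1 - {β} - {γ}) • a + {β} • b + {γ} • c`. If `{β} + {γ} ≤ 1` then `p` lies in the triangle,
so it is a vertex and both fractional parts vanish; otherwise the lattice point `b + c - p` lies
in the triangle without being a vertex. Hence all coordinates of `w` are integers.
-/

section Barycentric

variable {E : Type*} [AddCommGroup E] [Module ℝ E] {a b c x : E}

lemma mem_convexHull_triple_iff :
    x ∈ convexHull ℝ ({a, b, c} : Set E) ↔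
      ∃ α β γ : ℝ, 0 ≤ α ∧ 0 ≤ β ∧ 0 ≤ γ ∧ α + β + γ = 1 ∧ x = α • a + β • b + γ • c := by
  constructor
  · rw [← convexJoin_singleton_segment, mem_convexJoin]
    rintro ⟨_, rfl, y, ⟨s, t, hs, ht, hst, rfl⟩, u, v, hu, hv, huv, rfl⟩
    exact ⟨u, v * s, v * t, hu, mul_nonneg hv hs, mul_nonneg hv ht,
      by linear_combination v * hst + huv, by module⟩
  · rintro ⟨α, β, γ, hα, hβ, hγ, hsum, rfl⟩
    have hw : ∀ i ∈ Finset.univ, 0 ≤ ![α, β, γ] i := by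
      intro i _; fin_cases i <;> assumption
    have hz : ∀ i ∈ Finset.univ, ![a, b, c] i ∈ convexHull ℝ ({a, b, c} : Set E) := by
      intro i _; fin_cases i <;> exact subset_convexHull ℝ _ (by simp)
    simpa [Fin.sum_univ_three] using
      (convex_convexHull ℝ ({a, b, c} : Set E)).sum_mem hw (by simpa [Fin.sum_univ_three]) hz

lemma AffineIndependent.coeffs_eq_of_combo_eq (hind : AffineIndependent ℝ ![a, b, c])
    {α β γ α' β' γ' : ℝ} (hsum : α + β + γ = α' + β' + γ')
    (heq : α • a + β • b + γ • c = α' • a + β' • b + γ' • c) : α = α' ∧ β = β' ∧ γ = γ' := by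
  have key := hind.eq_of_sum_eq_sum (s := Finset.univ) (w₁ := ![α, β, γ]) (w₂ := ![α', β', γ'])
    (by simpa [Fin.sum_univ_three]) (by simpa [Fin.sum_univ_three])
  exact ⟨key 0 (by simp), key 1 (by simp), key 2 (by simp)⟩

end Barycentric

structure IsPrimitiveTriangle {E : Type*} [AddCommGroup E] [Module ℝ E] (L : AddSubgroup E)
    (a b c : E) : Prop where
  affineIndependent : AffineIndependent ℝ ![a, b, c]
  a_mem : a ∈ L
  b_mem : b ∈ L
  c_mem : c ∈ L
  convexHull_inter_subset : convexHull ℝ {a, b, c} ∩ (L : Set E) ⊆ {a, b, c}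

namespace IsPrimitiveTriangle

variable {E : Type*} [AddCommGroup E] [Module ℝ E] {L : AddSubgroup E} {a b c : E}

lemma coeffs_eq_zero_or_one (hT : IsPrimitiveTriangle L a b c) {α β γ : ℝ} (hα : 0 ≤ α)
    (hβ : 0 ≤ β) (hγ : 0 ≤ γ) (hsum : α + β + γ = 1) (hL : α • a + β • b + γ • c ∈ L) :
    (β = 0 ∨ β = 1) ∧ (γ = 0 ∨ γ = 1) := by
  have hvert := hT.convexHull_inter_subset
    ⟨mem_convexHull_triple_iff.2 ⟨α, β, γ, hα, hβ, hγ, hsum, rfl⟩, hL⟩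
  simp only [Set.mem_insert_iff, Set.mem_singleton_iff] at hvert
  have hcoeffs : ∀ α' β' γ' : ℝ, α' + β' + γ' = 1 →
      α • a + β • b + γ • c = α' • a + β' • b + γ' • c → β = β' ∧ γ = γ' :=
    fun _ _ _ hs heq ↦ (hT.affineIndependent.coeffs_eq_of_combo_eq (hsum.trans hs.symm) heq).2
  rcases hvert with hv | hv | hv
  · obtain ⟨h₂, h₃⟩ := hcoeffs 1 0 0 (by norm_num) (by rw [hv]; module)
    exact ⟨.inl h₂, .inl h₃⟩
  · obtain ⟨h₂, h₃⟩ := hcoeffs 0 1 0 (by norm_num) (by rw [hv]; module)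
    exact ⟨.inr h₂, .inl h₃⟩
  · obtain ⟨h₂, h₃⟩ := hcoeffs 0 0 1 (by norm_num) (by rw [hv]; module)
    exact ⟨.inl h₂, .inr h₃⟩

lemma eq_zero_of_mem_of_lt_one (hT : IsPrimitiveTriangle L a b c) {s t : ℝ} (hs₀ : 0 ≤ s)
    (hs₁ : s < 1) (ht₀ : 0 ≤ t) (ht₁ : t < 1) (hL : (1 - s - t) • a + s • b + t • c ∈ L) :
    s = 0 ∧ t = 0 := by
  by_cases hst : s + t ≤ 1
  · obtain ⟨hs | hs, ht | ht⟩ :=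
      hT.coeffs_eq_zero_or_one (by linarith) hs₀ ht₀ (by ring) hL <;>
    first | exact ⟨hs, ht⟩ | linarith
  · have hq : (s + t - 1) • a + (1 - s) • b + (1 - t) • c ∈ L := by
      convert L.sub_mem (L.add_mem hT.b_mem hT.c_mem) hL using 1
      module
    obtain ⟨hs | hs, ht | ht⟩ :=
      hT.coeffs_eq_zero_or_one (by linarith) (by linarith) (by linarith) (by ring) hq <;>
    linarith

lemma exists_int_coeffs (hT : IsPrimitiveTriangle L a b c) {α β γ : ℝ} {n : ℤ}
    (hsum : α + β + γ = n) (hL : α • a + β • b + γ • c ∈ L) :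
    ∃ i j k : ℤ, α = i ∧ β = j ∧ γ = k := by
  have hp : (1 - Int.fract β - Int.fract γ) • a + Int.fract β • b + Int.fract γ • c ∈ L := by
    have hint : ((n - 1 - ⌊β⌋ - ⌊γ⌋ : ℤ) : ℝ) = α - 1 + Int.fract β + Int.fract γ := by
      push_cast [Int.fract]; linarith
    convert L.sub_mem hL (L.add_mem (L.add_mem (L.zsmul_mem hT.a_mem (n - 1 - ⌊β⌋ - ⌊γ⌋))
      (L.zsmul_mem hT.b_mem ⌊β⌋)) (L.zsmul_mem hT.c_mem ⌊γ⌋)) using 1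
    simp only [← Int.cast_smul_eq_zsmul ℝ, hint, Int.fract]
    module
  obtain ⟨hβ, hγ⟩ := hT.eq_zero_of_mem_of_lt_one (Int.fract_nonneg β) (Int.fract_lt_one β)
    (Int.fract_nonneg γ) (Int.fract_lt_one γ) hp
  obtain ⟨j, rfl⟩ := Int.fract_eq_zero_iff.1 hβ
  obtain ⟨k, rfl⟩ := Int.fract_eq_zero_iff.1 hγ
  exact ⟨n - j - k, j, k, by push_cast; linarith, rfl, rfl⟩

end IsPrimitiveTriangle

def latticeAddSubgroup (n : ℕ) : AddSubgroup (Fin n → ℝ) where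
  carrier := latticePts n
  zero_mem' _ := ⟨0, by simp⟩
  add_mem' hx hy i := by
    obtain ⟨p, hp⟩ := hx i
    obtain ⟨q, hq⟩ := hy i
    exact ⟨p + q, by simp [hp, hq]⟩
  neg_mem' hx i := by
    obtain ⟨p, hp⟩ := hx i
    exact ⟨-p, by simp [hp]⟩

lemma exists_nat_eq_of_nonneg {x : ℝ} {m : ℤ} (hx : 0 ≤ x) (hm : x = m) : ∃ i : ℕ, x = i :=
  ⟨m.toNat, by rw [hm] at hx ⊢; exact_mod_cast (Int.toNat_of_nonneg (by exact_mod_cast hx)).symm⟩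

theorem rep_in_dilated_primitive_triangle_general
    (a b c : Fin 2 → ℝ) (ha : a ∈ latticePts 2) (hb : b ∈ latticePts 2)
    (hc : c ∈ latticePts 2) (hncol : ¬ Collinear ℝ ({a, b, c} : Set (Fin 2 → ℝ)))
    (T' : Set (Fin 2 → ℝ)) (hT : T' = convexHull ℝ {a, b, c})
    (hprim : T' ∩ latticePts 2 = {a, b, c})
    (h : ℕ)
    (w : Fin 2 → ℝ) (hwl : w ∈ latticePts 2) (hw : w ∈ dilate 2 h T') :
    ∃ i j k : ℕ, i + j + k = h ∧ w = (i : ℝ) • a + (j : ℝ) • b + (k : ℝ) • c := by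
  subst hT
  have hprimT : IsPrimitiveTriangle (latticeAddSubgroup 2) a b c :=
    ⟨affineIndependent_iff_not_collinear_set.2 hncol, ha, hb, hc, hprim.subset⟩
  obtain ⟨x, hx, rfl⟩ := hw
  obtain ⟨α, β, γ, hα, hβ, hγ, hsum, rfl⟩ := mem_convexHull_triple_iff.1 hx
  have hcombo : (h : ℝ) • (α • a + β • b + γ • c) = (h * α) • a + (h * β) • b + (h * γ) • c := by
    module
  rw [hcombo] at hwl ⊢
  obtain ⟨i, j, k, hi, hj, hk⟩ :=
    hprimT.exists_int_coeffs (n := h) (by push_cast; linear_combination (h : ℝ) * hsum) hwl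
  have h_nonneg := h.cast_nonneg (α := ℝ)
  obtain ⟨i, hi⟩ := exists_nat_eq_of_nonneg (mul_nonneg h_nonneg hα) hi
  obtain ⟨j, hj⟩ := exists_nat_eq_of_nonneg (mul_nonneg h_nonneg hβ) hj
  obtain ⟨k, hk⟩ := exists_nat_eq_of_nonneg (mul_nonneg h_nonneg hγ) hk
  refine ⟨i, j, k, ?_, by rw [hi, hj, hk]⟩
  have hijk : (i + j + k : ℝ) = h := by
    rw [← hi, ← hj, ← hk]; linear_combination (h : ℝ) * hsum
  exact_mod_cast hijk

theorem rep_in_dilated_primitive_triangle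
    (a b c : Fin 2 → ℝ) (ha : a ∈ latticePts 2) (hb : b ∈ latticePts 2)
    (hc : c ∈ latticePts 2) (hncol : ¬ Collinear ℝ ({a, b, c} : Set (Fin 2 → ℝ)))
    (T' : Set (Fin 2 → ℝ)) (hT : T' = convexHull ℝ {a, b, c})
    (hprim : T' ∩ latticePts 2 = {a, b, c})
    (h : ℕ) (hh : 0 < h)
    (w : Fin 2 → ℝ) (hwl : w ∈ latticePts 2) (hw : w ∈ dilate 2 h T') :
    ∃ i j k : ℕ, i + j + k = h ∧ w = (i : ℝ) • a + (j : ℝ) • b + (k : ℝ) • c :=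
  rep_in_dilated_primitive_triangle_general a b c ha hb hc hncol T' hT hprim h w hwl hw
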